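/- Suppose Var(τ̂_t^{TE}) > Cov(τ̂_t^{TE}, τ̂_{t−1}^{TE}). Then there exists α ∈ (0,1) such that the convex combination estimator τ̂_t^c = α τ̂_t^{TE} + (1 − α) τ̂_{t−1}^{TE} has mean squared error for τ_t^{TE} strictly lower than Var(τ̂_t^{TE}). Moreover, if in addition Var(τ̂_t^{TE}) − Var(τ̂_{t−1}^{TE}) > 4ε², then the choice α = 1/2 yields MSE(τ̂_t^c) < Var(τ̂_t^{TE}). -/

import Mathlib

open MeasureTheory ProbabilityTheory Filter
open scoped ProbabilityTheory

/-- Horvitz–Thompson estimator of the total effect, based on the exposures `h1 i`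
(everybody treated) and `h0 i` (everybody in control). -/
noncomputable def htTE {Ω Δ : Type*} [MeasureSpace Ω] [DecidableEq Δ] {n : ℕ}
    (H : Fin n → Ω → Δ) (Y : Fin n → Δ → ℝ) (h1 h0 : Fin n → Δ) (ω : Ω) : ℝ :=
  (n : ℝ)⁻¹ * ∑ i : Fin n,
    ((if H i ω = h1 i then Y i (h1 i) / (ℙ {ω' | H i ω' = h1 i}).toReal else 0)
      - (if H i ω = h0 i then Y i (h0 i) / (ℙ {ω' | H i ω' = h0 i}).toReal else 0))

/-- The total effect `τ_t^{TE}`. -/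
noncomputable def totalEffect {Δ : Type*} {n : ℕ}
    (Y : Fin n → Δ → ℝ) (h1 h0 : Fin n → Δ) : ℝ :=
  (n : ℝ)⁻¹ * ∑ i : Fin n, (Y i (h1 i) - Y i (h0 i))

/-- Covariance of two real random variables. -/
noncomputable def cov {Ω : Type*} [MeasureSpace Ω] (X Z : Ω → ℝ) : ℝ :=
  ∫ ω, (X ω - ∫ x, X x) * (Z ω - ∫ x, Z x)

/-!
Write `X`, `Z` for the estimators at times `t` and `t - 1`. Both are bounded, so
`MSE(α X + (1 - α) Z) = α² Var X + (1 - α)² Var Z + 2 α (1 - α) Cov(X, Z) + (1 - α)² b²`,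
where `b = τ_{t-1} - τ_t` is the bias of `Z`, and weak stability gives `b² ≤ 4 ε²`.
At `α = 1` this is `Var X`, and its derivative there is `2 (Var X - Cov(X, Z)) > 0`,
so weights slightly below `1` do better. At `α = 1/2` it is
`(Var X + Var Z + 2 Cov(X, Z) + b²) / 4`, which is below `Var X` once `Var Z + b² < Var X`.
-/

section MeanSquaredError

variable {Ω : Type*} [MeasurableSpace Ω] {μ : Measure Ω} [IsProbabilityMeasure μ] {X Z : Ω → ℝ}

lemma integral_sub_const_sq (hX : MemLp X 2 μ) (c : ℝ) :
    ∫ ω, (X ω - c) ^ 2 ∂μ = Var[X; μ] + (μ[X] - c) ^ 2 := by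
  have hXc : MemLp (fun ω => X ω - c) 2 μ := hX.sub (memLp_const c)
  rw [← variance_sub_const hX.aestronglyMeasurable c, variance_eq_sub hXc,
    integral_sub (hX.integrable one_le_two) (integrable_const c)]
  simp

lemma integral_add_sub_const_sq (hX : MemLp X 2 μ) (hZ : MemLp Z 2 μ) (a b c : ℝ) :
    ∫ ω, (a * X ω + b * Z ω - c) ^ 2 ∂μ
      = a ^ 2 * Var[X; μ] + b ^ 2 * Var[Z; μ] + 2 * a * b * cov[X, Z; μ]
        + (a * μ[X] + b * μ[Z] - c) ^ 2 := by
  have haX : MemLp (fun ω => a * X ω) 2 μ := hX.const_mul a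
  have hbZ : MemLp (fun ω => b * Z ω) 2 μ := hZ.const_mul b
  have hW : MemLp (fun ω => a * X ω + b * Z ω) 2 μ := haX.add hbZ
  rw [integral_sub_const_sq hW, variance_fun_add haX hbZ, variance_const_mul,
    variance_const_mul, covariance_const_mul_left, covariance_const_mul_right,
    integral_add (haX.integrable one_le_two) (hbZ.integrable one_le_two),
    integral_const_mul, integral_const_mul]
  ring

end MeanSquaredError

section HorvitzThompson

variable {Ω Δ : Type*} [MeasureSpace Ω] {n : ℕ}
  (H : Fin n → Ω → Δ) (Y : Fin n → Δ → ℝ) (h1 h0 : Fin n → Δ)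

lemma abs_totalEffect_sub_le {Y' : Fin n → Δ → ℝ} {ε : ℝ} (hY : ∀ i a, |Y i a - Y' i a| ≤ ε) :
    |totalEffect Y h1 h0 - totalEffect Y' h1 h0| ≤ 2 * |ε| := by
  have hdiff : totalEffect Y h1 h0 - totalEffect Y' h1 h0 = (n : ℝ)⁻¹ * ∑ i : Fin n,
      ((Y i (h1 i) - Y' i (h1 i)) - (Y i (h0 i) - Y' i (h0 i))) := by
    simp only [totalEffect, ← mul_sub, ← Finset.sum_sub_distrib]
    congr 1
    exact Finset.sum_congr rfl fun i _ => by ring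
  have hterm : ∀ i, |(Y i (h1 i) - Y' i (h1 i)) - (Y i (h0 i) - Y' i (h0 i))| ≤ 2 * |ε| :=
    fun i => (abs_sub _ _).trans (by linarith [hY i (h1 i), hY i (h0 i), le_abs_self ε])
  calc |totalEffect Y h1 h0 - totalEffect Y' h1 h0|
      ≤ (n : ℝ)⁻¹ * ∑ _i : Fin n, 2 * |ε| := by
        rw [hdiff, abs_mul, abs_of_nonneg (by positivity)]
        gcongr
        exact (Finset.abs_sum_le_sum_abs _ _).trans (Finset.sum_le_sum fun i _ => hterm i)
    _ = ((n : ℝ)⁻¹ * n) * (2 * |ε|) := by simp [mul_assoc]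
    _ ≤ 2 * |ε| := mul_le_of_le_one_left (by positivity) inv_mul_le_one

variable [DecidableEq Δ]

lemma measurable_htTE [MeasurableSpace Δ] [MeasurableSingletonClass Δ]
    (hH : ∀ i, Measurable (H i)) : Measurable (htTE H Y h1 h0) := by
  refine (Finset.measurable_sum _ fun i _ => ?_).const_mul _
  exact (Measurable.ite (hH i (measurableSet_singleton (h1 i))) measurable_const
    measurable_const).sub
    (Measurable.ite (hH i (measurableSet_singleton (h0 i))) measurable_const measurable_const)

lemma abs_htTE_le (ω : Ω) :
    |htTE H Y h1 h0 ω| ≤ (n : ℝ)⁻¹ * ∑ i : Fin n,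
      (|Y i (h1 i) / (ℙ {ω' | H i ω' = h1 i}).toReal|
        + |Y i (h0 i) / (ℙ {ω' | H i ω' = h0 i}).toReal|) := by
  rw [htTE, abs_mul, abs_of_nonneg (by positivity)]
  refine mul_le_mul_of_nonneg_left ?_ (by positivity)
  refine (Finset.abs_sum_le_sum_abs _ _).trans (Finset.sum_le_sum fun i _ => ?_)
  refine (abs_sub _ _).trans (add_le_add ?_ ?_) <;> split_ifs <;> simp

lemma memLp_htTE [MeasurableSpace Δ] [MeasurableSingletonClass Δ]
    [IsFiniteMeasure (ℙ : Measure Ω)]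
    (hH : ∀ i, Measurable (H i)) (p : ENNReal) : MemLp (htTE H Y h1 h0) p ℙ :=
  MemLp.of_bound (measurable_htTE H Y h1 h0 hH).aestronglyMeasurable _
    (Eventually.of_forall (abs_htTE_le H Y h1 h0))

end HorvitzThompson

section ConvexWeights

variable {v w c τ τ' : ℝ}

lemma exists_mem_Ioo_convex_mse_lt (hc : c < v) : ∃ α ∈ Set.Ioo (0 : ℝ) 1,
    α ^ 2 * v + (1 - α) ^ 2 * w + 2 * α * (1 - α) * c + (α * τ + (1 - α) * τ' - τ) ^ 2 < v := by
  set δ := v - c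
  set K := v + w - 2 * c + (τ' - τ) ^ 2
  have hδ : 0 < δ := sub_pos.2 hc
  -- this choice of `s` makes `s * K ≤ s * |K| < δ`, so `2 δ - s K > 0` in `hexp` below
  set s := δ / (2 * δ + |K|)
  have hs : 0 < s := by positivity
  have hs1 : s < 1 := (div_lt_one (by positivity)).2 (by linarith [abs_nonneg K])
  have hsK : s * |K| < δ := by
    rw [div_mul_eq_mul_div, div_lt_iff₀ (by positivity)]
    nlinarith [abs_nonneg K]
  refine ⟨1 - s, ⟨by linarith, by linarith⟩, ?_⟩
  have hexp : (1 - s) ^ 2 * v + (1 - (1 - s)) ^ 2 * w + 2 * (1 - s) * (1 - (1 - s)) * c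
      + ((1 - s) * τ + (1 - (1 - s)) * τ' - τ) ^ 2 = v - s * (2 * δ - s * K) := by ring
  rw [hexp]
  nlinarith [mul_le_mul_of_nonneg_left (le_abs_self K) hs.le]

lemma half_convex_mse_lt (hc : c < v) (hgap : (τ' - τ) ^ 2 < v - w) :
    (1 / 2) ^ 2 * v + (1 / 2) ^ 2 * w + 2 * (1 / 2) * (1 / 2) * c
      + (1 / 2 * τ + 1 / 2 * τ' - τ) ^ 2 < v := by
  have hbias : (1 / 2 * τ + 1 / 2 * τ' - τ) ^ 2 = (τ' - τ) ^ 2 / 4 := by ring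
  rw [hbias]
  linarith

end ConvexWeights

theorem stmt13_general {Ω Δ : Type*} [MeasureSpace Ω] [IsProbabilityMeasure (ℙ : Measure Ω)]
    [DecidableEq Δ] [MeasurableSpace Δ] [MeasurableSingletonClass Δ]
    {n T : ℕ}
    (H : ℕ → Fin n → Ω → Δ) (hmeas : ∀ (t : ℕ) (i : Fin n), Measurable (H t i))
    (Y : ℕ → Fin n → Δ → ℝ) (h1 h0 : Fin n → Δ)
    -- ε-weak stability of the potential outcomes
    (ε : ℝ)
    (hstab : ∀ t : ℕ, t + 1 < T → ∀ (i : Fin n) (a : Δ), |Y t i a - Y (t + 1) i a| ≤ ε)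
    -- the Horvitz–Thompson estimators are unbiased
    (hunbiased : ∀ t : ℕ, t < T →
      ∫ ω, htTE (H t) (Y t) h1 h0 ω = totalEffect (Y t) h1 h0)
    (t : ℕ) (ht1 : 1 ≤ t) (htT : t < T)
    -- Var(τ̂_t) > Cov(τ̂_t, τ̂_{t−1})
    (hVC : cov (htTE (H t) (Y t) h1 h0) (htTE (H (t - 1)) (Y (t - 1)) h1 h0)
      < variance (htTE (H t) (Y t) h1 h0) ℙ) :
    -- (a) some convex weight gives mean squared error strictly below Var(τ̂_t)
    (∃ α ∈ Set.Ioo (0 : ℝ) 1,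
      ∫ ω, ((α * htTE (H t) (Y t) h1 h0 ω
              + (1 - α) * htTE (H (t - 1)) (Y (t - 1)) h1 h0 ω)
            - totalEffect (Y t) h1 h0) ^ 2
        < variance (htTE (H t) (Y t) h1 h0) ℙ) ∧
    -- (b) under the stronger variance gap, α = 1/2 works
    (4 * ε ^ 2 < variance (htTE (H t) (Y t) h1 h0) ℙ
        - variance (htTE (H (t - 1)) (Y (t - 1)) h1 h0) ℙ →
      ∫ ω, (((1 : ℝ) / 2 * htTE (H t) (Y t) h1 h0 ω
              + (1 : ℝ) / 2 * htTE (H (t - 1)) (Y (t - 1)) h1 h0 ω)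
            - totalEffect (Y t) h1 h0) ^ 2
        < variance (htTE (H t) (Y t) h1 h0) ℙ) := by
  set X := htTE (H t) (Y t) h1 h0
  set Z := htTE (H (t - 1)) (Y (t - 1)) h1 h0
  have hX : MemLp X 2 ℙ := memLp_htTE _ _ _ _ (hmeas t) 2
  have hZ : MemLp Z 2 ℙ := memLp_htTE _ _ _ _ (hmeas (t - 1)) 2
  have hEX : ℙ[X] = totalEffect (Y t) h1 h0 := hunbiased t htT
  have hEZ : ℙ[Z] = totalEffect (Y (t - 1)) h1 h0 := hunbiased (t - 1) (by omega)
  have hbias : (totalEffect (Y (t - 1)) h1 h0 - totalEffect (Y t) h1 h0) ^ 2 ≤ 4 * ε ^ 2 := by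
    have hstep := abs_totalEffect_sub_le (Y (t - 1)) h1 h0 fun i a => by
      simpa only [Nat.sub_add_cancel ht1] using hstab (t - 1) (by omega) i a
    calc _ ≤ (2 * |ε|) ^ 2 := sq_le_sq.2 (hstep.trans (le_abs_self _))
      _ = 4 * ε ^ 2 := by rw [mul_pow, sq_abs]; norm_num
  refine ⟨?_, fun hgap => ?_⟩
  · obtain ⟨α, hα, hlt⟩ := exists_mem_Ioo_convex_mse_lt (w := Var[Z; ℙ])
      (τ := totalEffect (Y t) h1 h0) (τ' := totalEffect (Y (t - 1)) h1 h0) hVC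
    refine ⟨α, hα, ?_⟩
    rwa [integral_add_sub_const_sq hX hZ, hEX, hEZ]
  · rw [integral_add_sub_const_sq hX hZ, hEX, hEZ]
    exact half_convex_mse_lt hVC (by linarith)

/-- if `Var(τ̂_t) > Cov(τ̂_t, τ̂_{t−1})` then some convex combination
of the current and previous estimators strictly reduces the mean squared error; if
moreover `Var(τ̂_t) − Var(τ̂_{t−1}) > 4ε²`, the weight `α = 1/2` suffices. -/
theorem stmt13 {Ω Δ : Type*} [MeasureSpace Ω] [IsProbabilityMeasure (ℙ : Measure Ω)]
    [Fintype Δ] [DecidableEq Δ] [MeasurableSpace Δ] [MeasurableSingletonClass Δ]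
    {n T : ℕ}
    (H : ℕ → Fin n → Ω → Δ) (hmeas : ∀ (t : ℕ) (i : Fin n), Measurable (H t i))
    (Y : ℕ → Fin n → Δ → ℝ) (h1 h0 : Fin n → Δ)
    -- exposure probabilities are positive
    (hpos : ∀ (t : ℕ), t < T → ∀ i : Fin n,
      0 < (ℙ {ω | H t i ω = h1 i}).toReal ∧ 0 < (ℙ {ω | H t i ω = h0 i}).toReal)
    -- ε-weak stability of the potential outcomes
    (ε : ℝ)
    (hstab : ∀ t : ℕ, t + 1 < T → ∀ (i : Fin n) (a : Δ), |Y t i a - Y (t + 1) i a| ≤ ε)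
    -- the Horvitz–Thompson estimators are unbiased
    (hunbiased : ∀ t : ℕ, t < T →
      ∫ ω, htTE (H t) (Y t) h1 h0 ω = totalEffect (Y t) h1 h0)
    (t : ℕ) (ht1 : 1 ≤ t) (htT : t < T)
    -- Var(τ̂_t) > Cov(τ̂_t, τ̂_{t−1})
    (hVC : cov (htTE (H t) (Y t) h1 h0) (htTE (H (t - 1)) (Y (t - 1)) h1 h0)
      < variance (htTE (H t) (Y t) h1 h0) ℙ) :
    -- (a) some convex weight gives mean squared error strictly below Var(τ̂_t)
    (∃ α ∈ Set.Ioo (0 : ℝ) 1,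
      ∫ ω, ((α * htTE (H t) (Y t) h1 h0 ω
              + (1 - α) * htTE (H (t - 1)) (Y (t - 1)) h1 h0 ω)
            - totalEffect (Y t) h1 h0) ^ 2
        < variance (htTE (H t) (Y t) h1 h0) ℙ) ∧
    -- (b) under the stronger variance gap, α = 1/2 works
    (4 * ε ^ 2 < variance (htTE (H t) (Y t) h1 h0) ℙ
        - variance (htTE (H (t - 1)) (Y (t - 1)) h1 h0) ℙ →
      ∫ ω, (((1 : ℝ) / 2 * htTE (H t) (Y t) h1 h0 ω
              + (1 : ℝ) / 2 * htTE (H (t - 1)) (Y (t - 1)) h1 h0 ω)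
            - totalEffect (Y t) h1 h0) ^ 2
        < variance (htTE (H t) (Y t) h1 h0) ℙ) :=
  stmt13_general H hmeas Y h1 h0 ε hstab hunbiased t ht1 htT hVC
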